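/- arXiv:1011.0317 — 2 statements merged into one kernel-verified Lean document; each statement's English description precedes it below -/
import Mathlib

section
/- For every formula A, intuitionistic logic proves Kr(A) ↔ G(A), i.e., the Krivine and Gödel–Gentzen negative translations are equivalent in intuitionistic logic. -/
/-- Formulas of pure first-order predicate logic (de Bruijn indices;
terms are just variables, atoms are predicate symbols applied to variables). -/
inductive Formula : Type
  | bot : Formula
  | atom : ℕ → List ℕ → Formula
  | and : Formula → Formula → Formula
  | or : Formula → Formula → Formula
  | imp : Formula → Formula → Formula
  | all : Formula → Formula
  | ex : Formula → Formula

namespace Formula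

def neg (A : Formula) : Formula := A.imp bot
def iff (A B : Formula) : Formula := (A.imp B).and (B.imp A)

/-- Lift (shift by one) the free variables ≥ c. -/
def liftVar (c v : ℕ) : ℕ := if v < c then v else v + 1

def lift : ℕ → Formula → Formula
  | _, bot => bot
  | c, atom p ts => atom p (ts.map (liftVar c))
  | c, and A B => and (lift c A) (lift c B)
  | c, or A B => or (lift c A) (lift c B)
  | c, imp A B => imp (lift c A) (lift c B)
  | c, all A => all (lift (c+1) A)
  | c, ex A => ex (lift (c+1) A)

/-- Substitute the term (variable) `t` for the bound variable at depth `c`. -/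
def substVar (c t v : ℕ) : ℕ := if v < c then v else if v = c then t + c else v - 1

def subst : ℕ → ℕ → Formula → Formula
  | _, _, bot => bot
  | c, t, atom p ts => atom p (ts.map (substVar c t))
  | c, t, and A B => and (subst c t A) (subst c t B)
  | c, t, or A B => or (subst c t A) (subst c t B)
  | c, t, imp A B => imp (subst c t A) (subst c t B)
  | c, t, all A => all (subst (c+1) t A)
  | c, t, ex A => ex (subst (c+1) t A)

end Formula

/-- The three flavours of logic: minimal, intuitionistic, classical. -/
inductive Flavour : Type
  | min | int | cl
  deriving DecidableEq

/-- Natural deduction. `Prf f Γ A`: A is derivable from hypotheses Γ in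
minimal/intuitionistic/classical first-order logic according to `f`. -/
inductive Prf : Flavour → Set Formula → Formula → Prop
  | hyp {f : Flavour} {Γ : Set Formula} {A : Formula} : A ∈ Γ → Prf f Γ A
  | andI {f : Flavour} {Γ : Set Formula} {A B : Formula} : Prf f Γ A → Prf f Γ B → Prf f Γ (A.and B)
  | andE1 {f : Flavour} {Γ : Set Formula} {A B : Formula} : Prf f Γ (A.and B) → Prf f Γ A
  | andE2 {f : Flavour} {Γ : Set Formula} {A B : Formula} : Prf f Γ (A.and B) → Prf f Γ B
  | orI1 {f : Flavour} {Γ : Set Formula} {A B : Formula} : Prf f Γ A → Prf f Γ (A.or B)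
  | orI2 {f : Flavour} {Γ : Set Formula} {A B : Formula} : Prf f Γ B → Prf f Γ (A.or B)
  | orE {f : Flavour} {Γ : Set Formula} {A B C : Formula} : Prf f Γ (A.or B) → Prf f (insert A Γ) C →
      Prf f (insert B Γ) C → Prf f Γ C
  | impI {f : Flavour} {Γ : Set Formula} {A B : Formula} : Prf f (insert A Γ) B → Prf f Γ (A.imp B)
  | impE {f : Flavour} {Γ : Set Formula} {A B : Formula} : Prf f Γ (A.imp B) → Prf f Γ A → Prf f Γ B
  | allI {f : Flavour} {Γ : Set Formula} {A : Formula} : Prf f (Formula.lift 0 '' Γ) A → Prf f Γ (Formula.all A)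
  | allE {f : Flavour} {Γ : Set Formula} {A : Formula} (t : ℕ) : Prf f Γ (Formula.all A) → Prf f Γ (A.subst 0 t)
  | exI {f : Flavour} {Γ : Set Formula} {A : Formula} (t : ℕ) : Prf f Γ (A.subst 0 t) → Prf f Γ (Formula.ex A)
  | exE {f : Flavour} {Γ : Set Formula} {A B : Formula} : Prf f Γ (Formula.ex A) →
      Prf f (insert A (Formula.lift 0 '' Γ)) (B.lift 0) → Prf f Γ B
  | exfalso {f : Flavour} {Γ : Set Formula} {A : Formula} : f ≠ Flavour.min → Prf f Γ Formula.bot → Prf f Γ A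
  | dne {f : Flavour} {Γ : Set Formula} {A : Formula} : f = Flavour.cl → Prf f Γ A.neg.neg → Prf f Γ A

/-- The Gödel–Gentzen negative translation. -/
def G : Formula → Formula
  | .bot => .bot
  | .atom p ts => (Formula.atom p ts).neg.neg
  | .and A B => (G A).and (G B)
  | .or A B => ((G A).neg.and (G B).neg).neg
  | .imp A B => (G A).imp (G B)
  | .all A => .all (G A)
  | .ex A => (Formula.all (G A).neg).neg

/-- The negative fragment: ⊥, negated atoms, closed under ∧, →, ∀. -/
inductive NF : Formula → Prop
  | bot : NF Formula.bot
  | negAtom (p : ℕ) (ts : List ℕ) : NF (Formula.atom p ts).neg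
  | and {A B} : NF A → NF B → NF (A.and B)
  | imp {A B} : NF A → NF B → NF (A.imp B)
  | all {A} : NF A → NF (Formula.all A)

/-- The inner part of the Krivine translation. -/
def Kr' : Formula → Formula
  | .bot => Formula.bot.neg
  | .atom p ts => (Formula.atom p ts).neg
  | .and A B => (Kr' A).or (Kr' B)
  | .or A B => (Kr' A).and (Kr' B)
  | .imp A B => (Kr' A).neg.and (Kr' B)
  | .all A => .ex (Kr' A)
  | .ex A => (Formula.ex (Kr' A).neg).neg

/-- The Krivine negative translation Kr(A) = ¬Kr'(A). -/
def Kr (A : Formula) : Formula := (Kr' A).neg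

/-!
The clauses of Kr' are De Morgan duals of those of the Gödel–Gentzen translation, and each
dualisation is an equivalence of minimal logic: ¬(X ∨ Y) ≡ ¬X ∧ ¬Y, ¬(X ∧ Y) ≡ X → ¬Y,
¬∃X ≡ ∀¬X, ¬(X ∧ Y) ≡ ¬(¬¬X ∧ ¬¬Y) and ¬¬⊥ ≡ ⊥. As provable equivalence is a congruence for
∧, →, ¬ and ∀, induction on A proves ¬Kr'(A) ≡ G(A) case by case. No step uses ex falso, so the
equivalence holds already in minimal logic.
-/

namespace Formula

theorem substVar_zero_liftVar_succ (c v : ℕ) : substVar c 0 (liftVar (c + 1) v) = v := by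
  unfold liftVar substVar
  split_ifs <;> omega

@[simp]
theorem subst_zero_lift_succ : ∀ (A : Formula) (c : ℕ), (A.lift (c + 1)).subst c 0 = A
  | bot, _ => rfl
  | atom p ts, c => by simp [lift, subst, Function.comp_def, substVar_zero_liftVar_succ]
  | and A B, c | or A B, c | imp A B, c => by
    simp [lift, subst, subst_zero_lift_succ A c, subst_zero_lift_succ B c]
  | all A, c | ex A, c => by simp [lift, subst, subst_zero_lift_succ A (c + 1)]

end Formula

open Formula

namespace Prf

variable {f : Flavour} {Γ : Set Formula} {A : Formula}

theorem mono (h : Prf f Γ A) {Δ : Set Formula} (hΓΔ : Γ ⊆ Δ) : Prf f Δ A := by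
  induction h generalizing Δ with
  | hyp h => exact .hyp (hΓΔ h)
  | andI _ _ ih₁ ih₂ => exact .andI (ih₁ hΓΔ) (ih₂ hΓΔ)
  | andE1 _ ih => exact .andE1 (ih hΓΔ)
  | andE2 _ ih => exact .andE2 (ih hΓΔ)
  | orI1 _ ih => exact .orI1 (ih hΓΔ)
  | orI2 _ ih => exact .orI2 (ih hΓΔ)
  | orE _ _ _ ih ih₁ ih₂ =>
    exact .orE (ih hΓΔ) (ih₁ (Set.insert_subset_insert hΓΔ)) (ih₂ (Set.insert_subset_insert hΓΔ))
  | impI _ ih => exact .impI (ih (Set.insert_subset_insert hΓΔ))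
  | impE _ _ ih₁ ih₂ => exact .impE (ih₁ hΓΔ) (ih₂ hΓΔ)
  | allI _ ih => exact .allI (ih (Set.image_mono hΓΔ))
  | allE t _ ih => exact .allE t (ih hΓΔ)
  | exI t _ ih => exact .exI t (ih hΓΔ)
  | exE _ _ ih₁ ih₂ => exact .exE (ih₁ hΓΔ) (ih₂ (Set.insert_subset_insert (Set.image_mono hΓΔ)))
  | exfalso hf _ ih => exact .exfalso hf (ih hΓΔ)
  | dne hf _ ih => exact .dne hf (ih hΓΔ)

theorem hyp0 : Prf f (insert A Γ) A := .hyp (by simp)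

theorem hyp1 {B : Formula} : Prf f (insert B (insert A Γ)) A := .hyp (by simp)

theorem hyp2 {B C : Formula} : Prf f (insert C (insert B (insert A Γ))) A := .hyp (by simp)

theorem hyp3 {B C D : Formula} : Prf f (insert D (insert C (insert B (insert A Γ)))) A :=
  .hyp (by simp)

/-- In de Bruijn form, `∀ (A.lift 1)` is the generalisation of `A` over the variable `0`. -/
theorem allE_lift (h : Prf f Γ (all (A.lift 1))) : Prf f Γ A := by
  simpa using h.allE 0

theorem exI_lift (h : Prf f Γ A) : Prf f Γ (ex (A.lift 1)) :=
  .exI 0 (by simpa using h)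

end Prf

def ProvEquiv (f : Flavour) (A B : Formula) : Prop := Prf f ∅ (A.iff B)

namespace ProvEquiv

variable {f : Flavour} {Γ : Set Formula} {A A' B B' C : Formula}

theorem intro (h₁ : Prf f (insert A ∅) B) (h₂ : Prf f (insert B ∅) A) : ProvEquiv f A B :=
  .andI (.impI h₁) (.impI h₂)

theorem mp (h : ProvEquiv f A B) (hA : Prf f Γ A) : Prf f Γ B :=
  .impE ((Prf.andE1 h).mono (Set.empty_subset Γ)) hA

theorem mpr (h : ProvEquiv f A B) (hB : Prf f Γ B) : Prf f Γ A :=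
  .impE ((Prf.andE2 h).mono (Set.empty_subset Γ)) hB

theorem refl (A : Formula) : ProvEquiv f A A :=
  intro .hyp0 .hyp0

theorem trans (h₁ : ProvEquiv f A B) (h₂ : ProvEquiv f B C) : ProvEquiv f A C :=
  intro (h₂.mp (h₁.mp .hyp0)) (h₁.mpr (h₂.mpr .hyp0))

theorem imp_congr (hA : ProvEquiv f A A') (hB : ProvEquiv f B B') :
    ProvEquiv f (A.imp B) (A'.imp B') :=
  intro (.impI (hB.mp (.impE .hyp1 (hA.mpr .hyp0))))
    (.impI (hB.mpr (.impE .hyp1 (hA.mp .hyp0))))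

theorem neg_congr (h : ProvEquiv f A B) : ProvEquiv f A.neg B.neg :=
  imp_congr h (refl bot)

theorem and_congr (hA : ProvEquiv f A A') (hB : ProvEquiv f B B') :
    ProvEquiv f (A.and B) (A'.and B') :=
  intro (.andI (hA.mp (.andE1 .hyp0)) (hB.mp (.andE2 .hyp0)))
    (.andI (hA.mpr (.andE1 .hyp0)) (hB.mpr (.andE2 .hyp0)))

theorem all_congr (h : ProvEquiv f A B) : ProvEquiv f (all A) (all B) :=
  intro (.allI (h.mp (Prf.allE_lift (.hyp (by simp [lift])))))
    (.allI (h.mpr (Prf.allE_lift (.hyp (by simp [lift])))))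

theorem neg_neg_bot : ProvEquiv f bot.neg.neg bot :=
  intro (.impE .hyp0 (.impI .hyp0)) (.impI .hyp1)

theorem neg_or : ProvEquiv f (A.or B).neg (A.neg.and B.neg) :=
  intro (.andI (.impI (.impE .hyp1 (.orI1 .hyp0))) (.impI (.impE .hyp1 (.orI2 .hyp0))))
    (.impI (.orE .hyp0 (.impE (.andE1 .hyp2) .hyp0) (.impE (.andE2 .hyp2) .hyp0)))

theorem neg_and_neg_neg : ProvEquiv f (A.and B).neg (A.neg.neg.and B.neg.neg).neg :=
  intro
    (.impI (.impE (.andE1 .hyp0)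
      (.impI (.impE (.andE2 .hyp1) (.impI (.impE .hyp3 (.andI .hyp1 .hyp0)))))))
    (.impI (.impE .hyp1
      (.andI (.impI (.impE .hyp0 (.andE1 .hyp1))) (.impI (.impE .hyp0 (.andE2 .hyp1))))))

theorem neg_and_imp_neg : ProvEquiv f (A.and B).neg (A.imp B.neg) :=
  intro (.impI (.impI (.impE .hyp2 (.andI .hyp1 .hyp0))))
    (.impI (.impE (.impE .hyp1 (.andE1 .hyp0)) (.andE2 .hyp0)))

theorem neg_ex : ProvEquiv f (ex A).neg (all A.neg) :=
  intro (.allI (.impI (.impE (.hyp (by simp [lift, neg])) (Prf.exI_lift .hyp0))))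
    (.impI (.exE .hyp0 (.impE (Prf.allE_lift (A := A.neg) (.hyp (by simp [lift]))) .hyp0)))

end ProvEquiv

open ProvEquiv in
theorem Kr_provEquiv_G (f : Flavour) (A : Formula) : ProvEquiv f (Kr A) (G A) := by
  induction A with
  | bot => exact neg_neg_bot
  | atom => exact refl _
  | and A B ihA ihB => exact neg_or.trans (ihA.and_congr ihB)
  | or A B ihA ihB => exact neg_and_neg_neg.trans (ihA.neg_congr.and_congr ihB.neg_congr).neg_congr
  | imp A B ihA ihB => exact neg_and_imp_neg.trans (ihA.imp_congr ihB)
  | all A ihA => exact neg_ex.trans ihA.all_congr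
  | ex A ihA => exact (neg_ex.trans ihA.neg_congr.all_congr).neg_congr

/-- Krivine and Gödel–Gentzen are equivalent in intuitionistic logic. -/
theorem Kr_equiv_G (A : Formula) : Prf Flavour.int ∅ ((Kr A).iff (G A)) :=
  Kr_provEquiv_G Flavour.int A
end

section
/- For any fixed formula F, the translation N₁ defined by N₁(A) = G(A) ∨ F satisfies the soundness theorem into minimal logic: for every set of formulas Γ and formula A, if CL + Γ ⊢ A then ML + N₁(Γ) ⊢ N₁(A). -/
/-- The translation N₁(A) = G(A) ∨ F. -/
def N1 (F A : Formula) : Formula := (G A).or F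


section Lemmas

open Formula

/-- Weakening. -/
theorem Prf.weaken {f : Flavour} {Γ Δ : Set Formula} {A : Formula}
    (h : Prf f Γ A) (hsub : Γ ⊆ Δ) : Prf f Δ A := by
  induction h generalizing Δ with
  | hyp hm => exact .hyp (hsub hm)
  | andI _ _ ih1 ih2 => exact .andI (ih1 hsub) (ih2 hsub)
  | andE1 _ ih => exact .andE1 (ih hsub)
  | andE2 _ ih => exact .andE2 (ih hsub)
  | orI1 _ ih => exact .orI1 (ih hsub)
  | orI2 _ ih => exact .orI2 (ih hsub)
  | orE _ _ _ ih ih1 ih2 =>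
      exact .orE (ih hsub) (ih1 (Set.insert_subset_insert hsub))
        (ih2 (Set.insert_subset_insert hsub))
  | impI _ ih => exact .impI (ih (Set.insert_subset_insert hsub))
  | impE _ _ ih1 ih2 => exact .impE (ih1 hsub) (ih2 hsub)
  | allI _ ih => exact .allI (ih (Set.image_mono hsub))
  | allE t _ ih => exact .allE t (ih hsub)
  | exI t _ ih => exact .exI t (ih hsub)
  | exE _ _ ih ih2 =>
      exact .exE (ih hsub) (ih2 (Set.insert_subset_insert (Set.image_mono hsub)))
  | exfalso hf _ ih => exact .exfalso hf (ih hsub)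
  | dne hf _ ih => exact .dne hf (ih hsub)

theorem Prf.weaken_insert {f : Flavour} {Γ : Set Formula} {A B : Formula}
    (h : Prf f Γ A) : Prf f (insert B Γ) A :=
  h.weaken (Set.subset_insert _ _)

theorem Prf.hyp0_s11 {f : Flavour} {Γ : Set Formula} {A : Formula} :
    Prf f (insert A Γ) A := .hyp (Set.mem_insert _ _)

theorem Prf.hyp1_s11 {f : Flavour} {Γ : Set Formula} {A B : Formula} :
    Prf f (insert B (insert A Γ)) A := .hyp (Set.mem_insert_of_mem _ (Set.mem_insert _ _))

/-- From ⊥ we get any double negation. -/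
theorem Prf.dnOfBot {f : Flavour} {Γ : Set Formula} {A : Formula}
    (h : Prf f Γ Formula.bot) : Prf f Γ A.neg.neg :=
  .impI h.weaken_insert

theorem Prf.dn {f : Flavour} {Γ : Set Formula} {A : Formula}
    (h : Prf f Γ A) : Prf f Γ A.neg.neg :=
  .impI (.impE .hyp0 h.weaken_insert)

theorem Prf.negE {f : Flavour} {Γ : Set Formula} {A : Formula}
    (h1 : Prf f Γ A.neg) (h2 : Prf f Γ A) : Prf f Γ Formula.bot :=
  Prf.impE (A := A) (B := Formula.bot) h1 h2

theorem G_lift (A : Formula) : ∀ c, G (A.lift c) = (G A).lift c := by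
  induction A with
  | bot => intro c; rfl
  | atom p ts => intro c; rfl
  | and A B ihA ihB => intro c; simp [Formula.lift, G, ihA, ihB]
  | or A B ihA ihB => intro c; simp [Formula.lift, G, Formula.neg, ihA, ihB]
  | imp A B ihA ihB => intro c; simp [Formula.lift, G, ihA, ihB]
  | all A ihA => intro c; simp [Formula.lift, G, ihA]
  | ex A ihA => intro c; simp [Formula.lift, G, Formula.neg, ihA]

theorem G_subst (A : Formula) : ∀ c t, G (A.subst c t) = (G A).subst c t := by
  induction A with
  | bot => intro c t; rfl
  | atom p ts => intro c t; rfl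
  | and A B ihA ihB => intro c t; simp [Formula.subst, G, ihA, ihB]
  | or A B ihA ihB => intro c t; simp [Formula.subst, G, Formula.neg, ihA, ihB]
  | imp A B ihA ihB => intro c t; simp [Formula.subst, G, ihA, ihB]
  | all A ihA => intro c t; simp [Formula.subst, G, ihA]
  | ex A ihA => intro c t; simp [Formula.subst, G, Formula.neg, ihA]

theorem subst_lift_succ (A : Formula) : ∀ c, (A.lift (c+1)).subst c 0 = A := by
  induction A with
  | bot => intro c; rfl
  | atom p ts =>
      intro c
      simp only [Formula.lift, Formula.subst, List.map_map, Formula.atom.injEq, true_and]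
      have : Formula.substVar c 0 ∘ Formula.liftVar (c+1) = id := by
        funext v
        simp only [Function.comp, Formula.substVar, Formula.liftVar, id]
        rcases lt_trichotomy v c with h | h | h
        · simp [h, Nat.lt_succ_of_lt h]
        · subst h; simp [Nat.lt_succ_self]
        · have h1 : ¬ v < c + 1 := by omega
          have h2 : ¬ v + 1 < c := by omega
          have h3 : v + 1 ≠ c := by omega
          simp [h1, h2, h3]
      simp [this]
  | and A B ihA ihB => intro c; simp [Formula.lift, Formula.subst, ihA, ihB]
  | or A B ihA ihB => intro c; simp [Formula.lift, Formula.subst, ihA, ihB]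
  | imp A B ihA ihB => intro c; simp [Formula.lift, Formula.subst, ihA, ihB]
  | all A ihA => intro c; simp [Formula.lift, Formula.subst, ihA]
  | ex A ihA => intro c; simp [Formula.lift, Formula.subst, ihA]

theorem NF_G (A : Formula) : NF (G A) := by
  induction A with
  | bot => exact .bot
  | atom p ts => exact .imp (.negAtom p ts) .bot
  | and A B ihA ihB => exact .and ihA ihB
  | or A B ihA ihB => exact .imp (.and (.imp ihA .bot) (.imp ihB .bot)) .bot
  | imp A B ihA ihB => exact .imp ihA ihB
  | all A ihA => exact .all ihA
  | ex A ihA => exact .imp (.all (.imp ihA .bot)) .bot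

/-- Stability of negative formulas in minimal logic. -/
theorem stab {A : Formula} (h : NF A) : ∀ Γ : Set Formula,
    Prf Flavour.min Γ (A.neg.neg.imp A) := by
  induction h with
  | bot =>
      intro Γ
      exact .impI (.impE .hyp0 (.impI .hyp0))
  | negAtom p ts =>
      intro Γ
      -- ¬¬¬X → ¬X
      exact .impI (.impI (.impE .hyp1 ((Prf.hyp0_s11).dn)))
  | @and A B hA hB ihA ihB =>
      intro Γ
      refine .impI (.andI ?_ ?_)
      · refine .impE (ihA _) (.impI (.impE (Prf.hyp1_s11) (.impI (.impE Prf.hyp1_s11 (.andE1 .hyp0)))))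
      · refine .impE (ihB _) (.impI (.impE (Prf.hyp1_s11) (.impI (.impE Prf.hyp1_s11 (.andE2 .hyp0)))))
  | @imp A B hA hB ihA ihB =>
      intro Γ
      refine .impI (.impI ?_)
      -- ctx: A, ¬¬(A→B) ; goal B
      refine .impE (ihB _) (.impI ?_)
      -- ctx: ¬B, A, ¬¬(A→B) ; goal ⊥
      refine Prf.negE (A := (A.imp B).neg)
        (Prf.hyp (Set.mem_insert_of_mem _ (Set.mem_insert_of_mem _ (Set.mem_insert _ _)))) (.impI ?_)
      -- ctx: (A→B), ¬B, A, ¬¬(A→B) ; goal ⊥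
      exact Prf.negE (A := B) (Prf.hyp (by simp))
        (.impE .hyp0 (Prf.hyp (A := A) (by simp)))
  | @all A hA ihA =>
      intro Γ
      refine .impI (.allI ?_)
      rw [Set.image_insert_eq]
      show Prf Flavour.min
        (insert ((Formula.all (A.lift 1)).neg.neg) (Formula.lift 0 '' Γ)) A
      refine .impE (ihA _) (.impI ?_)
      refine Prf.negE (A := (Formula.all (A.lift 1)).neg) Prf.hyp1_s11 (.impI ?_)
      refine Prf.negE (A := A) Prf.hyp1_s11 ?_
      have h0 : Prf Flavour.min (insert (Formula.all (A.lift 1)) (insert A.neg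
          (insert ((Formula.all (A.lift 1)).neg.neg) (Formula.lift 0 '' Γ))))
          ((A.lift 1).subst 0 0) := Prf.allE 0 Prf.hyp0_s11
      rwa [subst_lift_succ] at h0

end Lemmas

theorem image_G_lift (Γ : Set Formula) :
    G '' (Formula.lift 0 '' Γ) = Formula.lift 0 '' (G '' Γ) := by
  rw [Set.image_image, Set.image_image]
  exact Set.image_congr' (fun x => G_lift x 0)

/-- Soundness of the Gödel–Gentzen translation into minimal logic. -/
theorem Gsound {f : Flavour} {Γ : Set Formula} {A : Formula} (h : Prf f Γ A) :
    Prf Flavour.min (G '' Γ) (G A) := by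
  induction h with
  | hyp hm => exact .hyp (Set.mem_image_of_mem _ hm)
  | andI _ _ ih1 ih2 => exact .andI ih1 ih2
  | andE1 _ ih => exact .andE1 ih
  | andE2 _ ih => exact .andE2 ih
  | @orI1 _ A B _ ih =>
      exact .impI (Prf.negE (A := G A) (.andE1 .hyp0) ih.weaken_insert)
  | @orI2 _ A B _ ih =>
      exact .impI (Prf.negE (A := G B) (.andE2 .hyp0) ih.weaken_insert)
  | @orE _ A B C _ _ _ ih ih1 ih2 =>
      rw [Set.image_insert_eq] at ih1 ih2
      refine .impE (stab (NF_G C) _) (.impI ?_)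
      refine Prf.negE (A := (G A).neg.and (G B).neg) ih.weaken_insert (.andI ?_ ?_)
      · exact .impI (Prf.negE (A := G C) Prf.hyp1_s11
          (ih1.weaken (Set.insert_subset_insert (Set.subset_insert _ _))))
      · exact .impI (Prf.negE (A := G C) Prf.hyp1_s11
          (ih2.weaken (Set.insert_subset_insert (Set.subset_insert _ _))))
  | impI _ ih =>
      rw [Set.image_insert_eq] at ih
      exact .impI ih
  | impE _ _ ih1 ih2 => exact .impE ih1 ih2
  | allI _ ih =>
      rw [image_G_lift] at ih
      exact .allI ih
  | @allE _ A t _ ih =>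
      rw [G_subst]
      exact .allE t ih
  | @exI _ A t _ ih =>
      rw [G_subst] at ih
      refine .impI (Prf.negE (A := (G A).subst 0 t) ?_ ih.weaken_insert)
      exact Prf.allE t Prf.hyp0_s11
  | @exE _ A B _ _ ih1 ih2 =>
      rw [Set.image_insert_eq, image_G_lift, G_lift] at ih2
      refine .impE (stab (NF_G B) _) (.impI ?_)
      refine Prf.negE (A := Formula.all (G A).neg) ih1.weaken_insert (.allI ?_)
      rw [Set.image_insert_eq]
      refine .impI ?_
      refine Prf.negE (A := (G B).lift 0) (Prf.hyp ?_) ?_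
      · exact Set.mem_insert_of_mem _ (Set.mem_insert _ _)
      · exact ih2.weaken (Set.insert_subset_insert (Set.subset_insert _ _))
  | @exfalso _ A _ _ ih =>
      refine .impE (stab (NF_G A) _) ?_
      exact Prf.dnOfBot ih
  | @dne _ A _ _ ih =>
      exact .impE (stab (NF_G A) _) ih

attribute [local instance] Classical.propDecidable

theorem filter_subset_insert {L : List Formula} {A : Formula} {S : Set Formula}
    (h : ∀ x ∈ L.filter (· ≠ A), x ∈ S) : {B | B ∈ L} ⊆ insert A S := by
  intro x hx
  by_cases hxA : x = A
  · exact hxA ▸ Set.mem_insert _ _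
  · exact Set.mem_insert_of_mem _ (h x (List.mem_filter.2 ⟨hx, by simp [hxA]⟩))

theorem mem_of_mem_filter_ne {L : List Formula} {A x : Formula}
    (hx : x ∈ L.filter (· ≠ A)) : x ∈ L ∧ x ≠ A := by
  have := List.mem_filter.1 hx
  simpa using this

theorem preimList {Γ : Set Formula} : ∀ L : List Formula,
    (∀ C ∈ L, C ∈ Formula.lift 0 '' Γ) →
    ∃ M : List Formula, (∀ b ∈ M, b ∈ Γ) ∧ ∀ C ∈ L, C ∈ Formula.lift 0 '' {b | b ∈ M}
  | [], _ => ⟨[], by simp, by simp⟩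
  | C :: L, h => by
      obtain ⟨b, hb, rfl⟩ := h C (by simp)
      obtain ⟨M, hM1, hM2⟩ := preimList L (fun D hD => h D (List.mem_cons_of_mem _ hD))
      refine ⟨b :: M, ?_, ?_⟩
      · intro x hx
        rcases List.mem_cons.1 hx with rfl | hx
        · exact hb
        · exact hM1 x hx
      · intro D hD
        rcases List.mem_cons.1 hD with rfl | hD
        · exact ⟨b, by simp, rfl⟩
        · exact Set.image_mono (fun x hx => by
            simpa using Or.inr (by simpa using hx)) (hM2 D hD)

/-- Compactness: every derivation uses only finitely many hypotheses. -/
theorem Prf.compact {f : Flavour} {Γ : Set Formula} {A : Formula} (h : Prf f Γ A) :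
    ∃ L : List Formula, (∀ B ∈ L, B ∈ Γ) ∧ Prf f {B | B ∈ L} A := by
  induction h with
  | @hyp _ A hm =>
      exact ⟨[A], by simpa using hm, .hyp (by simp)⟩
  | andI _ _ ih1 ih2 =>
      obtain ⟨L1, hL1, hP1⟩ := ih1; obtain ⟨L2, hL2, hP2⟩ := ih2
      refine ⟨L1 ++ L2, ?_, .andI (hP1.weaken ?_) (hP2.weaken ?_)⟩
      · intro B hB; rcases List.mem_append.1 hB with h | h
        exacts [hL1 B h, hL2 B h]
      · intro x hx; exact List.mem_append.2 (Or.inl hx)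
      · intro x hx; exact List.mem_append.2 (Or.inr hx)
  | andE1 _ ih =>
      obtain ⟨L, hL, hP⟩ := ih; exact ⟨L, hL, .andE1 hP⟩
  | andE2 _ ih =>
      obtain ⟨L, hL, hP⟩ := ih; exact ⟨L, hL, .andE2 hP⟩
  | orI1 _ ih =>
      obtain ⟨L, hL, hP⟩ := ih; exact ⟨L, hL, .orI1 hP⟩
  | orI2 _ ih =>
      obtain ⟨L, hL, hP⟩ := ih; exact ⟨L, hL, .orI2 hP⟩
  | @orE _ A B C _ _ _ ih ih1 ih2 =>
      obtain ⟨L0, hL0, hP0⟩ := ih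
      obtain ⟨L1, hL1, hP1⟩ := ih1
      obtain ⟨L2, hL2, hP2⟩ := ih2
      refine ⟨L0 ++ L1.filter (· ≠ A) ++ L2.filter (· ≠ B), ?_,
        .orE (hP0.weaken ?_) (hP1.weaken ?_) (hP2.weaken ?_)⟩
      · intro x hx
        rcases List.mem_append.1 hx with hx | hx
        · rcases List.mem_append.1 hx with hx | hx
          · exact hL0 x hx
          · obtain ⟨hx1, hx2⟩ := mem_of_mem_filter_ne hx
            rcases hL1 x hx1 with h | h
            exacts [absurd h hx2, h]
        · obtain ⟨hx1, hx2⟩ := mem_of_mem_filter_ne hx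
          rcases hL2 x hx1 with h | h
          exacts [absurd h hx2, h]
      · intro x hx; simp only [Set.mem_setOf_eq, List.mem_append]; tauto
      · refine filter_subset_insert (fun x hx => ?_)
        simp only [Set.mem_setOf_eq, List.mem_append]; tauto
      · refine filter_subset_insert (fun x hx => ?_)
        simp only [Set.mem_setOf_eq, List.mem_append]; tauto
  | @impI _ A B _ ih =>
      obtain ⟨L, hL, hP⟩ := ih
      refine ⟨L.filter (· ≠ A), ?_, .impI (hP.weaken (filter_subset_insert (fun x hx => hx)))⟩
      intro x hx
      obtain ⟨hx1, hx2⟩ := mem_of_mem_filter_ne hx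
      rcases hL x hx1 with h | h
      exacts [absurd h hx2, h]
  | impE _ _ ih1 ih2 =>
      obtain ⟨L1, hL1, hP1⟩ := ih1; obtain ⟨L2, hL2, hP2⟩ := ih2
      refine ⟨L1 ++ L2, ?_, .impE (hP1.weaken ?_) (hP2.weaken ?_)⟩
      · intro B hB; rcases List.mem_append.1 hB with h | h
        exacts [hL1 B h, hL2 B h]
      · intro x hx; exact List.mem_append.2 (Or.inl hx)
      · intro x hx; exact List.mem_append.2 (Or.inr hx)
  | allI _ ih =>
      obtain ⟨L, hL, hP⟩ := ih
      obtain ⟨M, hM1, hM2⟩ := preimList L hL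
      exact ⟨M, hM1, .allI (hP.weaken (fun x hx => hM2 x hx))⟩
  | allE t _ ih =>
      obtain ⟨L, hL, hP⟩ := ih; exact ⟨L, hL, .allE t hP⟩
  | exI t _ ih =>
      obtain ⟨L, hL, hP⟩ := ih; exact ⟨L, hL, .exI t hP⟩
  | @exE Γ' A B _ _ ih1 ih2 =>
      obtain ⟨L1, hL1, hP1⟩ := ih1
      obtain ⟨L2, hL2, hP2⟩ := ih2
      have hL2' : ∀ x ∈ L2.filter (· ≠ A), x ∈ Formula.lift 0 '' Γ' := by
        intro x hx
        obtain ⟨hx1, hx2⟩ := mem_of_mem_filter_ne hx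
        rcases hL2 x hx1 with h | h
        exacts [absurd h hx2, h]
      obtain ⟨M, hM1, hM2⟩ := preimList (L2.filter (· ≠ A)) hL2'
      refine ⟨L1 ++ M, ?_, .exE (hP1.weaken ?_) (hP2.weaken ?_)⟩
      · intro x hx; rcases List.mem_append.1 hx with h | h
        exacts [hL1 x h, hM1 x h]
      · intro x hx; exact List.mem_append.2 (Or.inl hx)
      · refine filter_subset_insert (fun x hx => ?_)
        exact Set.image_mono (fun b hb => List.mem_append.2 (Or.inr hb)) (hM2 x hx)
  | exfalso hf _ ih =>
      obtain ⟨L, hL, hP⟩ := ih; exact ⟨L, hL, .exfalso hf hP⟩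
  | dne hf _ ih =>
      obtain ⟨L, hL, hP⟩ := ih; exact ⟨L, hL, .dne hf hP⟩

/-- Cut each hypothesis in the list against a disjunction with F. -/
theorem cutOr (F : Formula) : ∀ (L : List Formula) (Θ : Set Formula) (C : Formula),
    Prf Flavour.min ({x | x ∈ L} ∪ Θ) C →
    (∀ D ∈ L, Prf Flavour.min Θ (D.or F)) → Prf Flavour.min Θ (C.or F)
  | [], Θ, C, h, _ => .orI1 (h.weaken (by intro x hx; simpa using hx))
  | D :: L, Θ, C, h, hD => by
      refine .orE (hD D (by simp)) ?_ (.orI2 .hyp0)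
      refine cutOr F L (insert D Θ) C (h.weaken ?_)
        (fun D' hD' => (hD D' (by simp [hD'])).weaken_insert)
      intro x hx
      simp only [Set.mem_union, Set.mem_setOf_eq, List.mem_cons, Set.mem_insert_iff] at hx ⊢
      tauto

/-- Soundness of N₁ into minimal logic, for every formula F. -/
theorem N1_soundness (F : Formula) (Γ : Set Formula) (A : Formula)
    (h : Prf Flavour.cl Γ A) : Prf Flavour.min (N1 F '' Γ) (N1 F A) := by
  obtain ⟨L, hL, hP⟩ := (Gsound h).compact
  refine cutOr F L (N1 F '' Γ) (G A) (hP.weaken Set.subset_union_left) ?_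
  intro D hD
  obtain ⟨B, hB, rfl⟩ := hL D hD
  exact .hyp ⟨B, hB, rfl⟩
end
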